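/- arXiv:1511.04165 — 5 statements merged into one kernel-verified Lean document; each statement's English description precedes it below -/
import Mathlib

section
/- For a closed spherical convex body W in S^{n+1} (a closed, hemispherical, spherically convex set with nonempty interior), W equals its spherical polar set W° if and only if W has constant width π/2. -/
open scoped RealInnerProductSpace BigOperators
open Real

namespace Sph

/-- Ambient Euclidean space `ℝ^{n+2}` containing the sphere `S^{n+1}`. -/
abbrev E (n : ℕ) := EuclideanSpace ℝ (Fin (n + 2))

/-- The unit sphere `S^{n+1} ⊂ ℝ^{n+2}`. -/
def sph (n : ℕ) : Set (E n) := {x | ‖x‖ = 1}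

/-- The closed hemisphere `H(P)` centered at `P`. -/
def hemi {n : ℕ} (P : E n) : Set (E n) := {Q | ‖Q‖ = 1 ∧ 0 ≤ ⟪P, Q⟫}

/-- The boundary `∂H(P)` of the hemisphere centered at `P`. -/
def hemiBdry {n : ℕ} (P : E n) : Set (E n) := {Q | ‖Q‖ = 1 ∧ ⟪P, Q⟫ = 0}

/-- Geodesic (angular) distance on the unit sphere. -/
noncomputable def gdist {n : ℕ} (P Q : E n) : ℝ := Real.arccos ⟪P, Q⟫

/-- Radial normalization of a vector. -/
noncomputable def nmz {n : ℕ} (x : E n) : E n := ‖x‖⁻¹ • x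

/-- The geodesic arc joining `P` and `Q`. -/
noncomputable def arc {n : ℕ} (P Q : E n) : Set (E n) :=
  {X | ∃ t ∈ Set.Icc (0 : ℝ) 1, X = nmz ((1 - t) • P + t • Q)}

/-- A subset of the sphere is hemispherical if it misses some closed hemisphere. -/
def Hemispherical {n : ℕ} (W : Set (E n)) : Prop := ∃ P ∈ sph n, W ∩ hemi P = ∅

/-- Spherical convexity: a subset of the sphere closed under geodesic arcs. -/
noncomputable def SphConvex {n : ℕ} (W : Set (E n)) : Prop :=
  W ⊆ sph n ∧ ∀ P ∈ W, ∀ Q ∈ W, arc P Q ⊆ W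

/-- Interior of `W` relative to the sphere. -/
def sphInterior {n : ℕ} (W : Set (E n)) : Set (E n) :=
  {X | X ∈ W ∧ ∃ U : Set (E n), IsOpen U ∧ X ∈ U ∧ U ∩ sph n ⊆ W}

/-- Frontier of `W` relative to the sphere. -/
def sphFrontier {n : ℕ} (W : Set (E n)) : Set (E n) :=
  closure W ∩ closure (sph n \ W)

/-- A spherical convex body: closed, hemispherical, spherically convex,
with an interior point. -/
noncomputable def SphConvexBody {n : ℕ} (W : Set (E n)) : Prop :=
  IsClosed W ∧ Hemispherical W ∧ SphConvex W ∧ (sphInterior W).Nonempty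

/-- The hemisphere `H(P)` supports `W`. -/
noncomputable def Supports {n : ℕ} (W : Set (E n)) (P : E n) : Prop :=
  P ∈ sph n ∧ W ⊆ hemi P ∧ (sphFrontier W ∩ hemiBdry P).Nonempty

/-- The width of `W` determined by the supporting hemisphere `H(P)`:
the minimum thickness `π - |PQ|` of lunes `H(P) ∩ H(Q)` over supporting
hemispheres `H(Q)` (so that `W ⊆ H(P) ∩ H(Q)`). -/
noncomputable def widthAt {n : ℕ} (W : Set (E n)) (P : E n) : ℝ :=
  sInf {d | ∃ Q, Supports W Q ∧ d = π - gdist P Q}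

/-- `W` is of constant width `ρ`. -/
noncomputable def ConstWidth {n : ℕ} (W : Set (E n)) (ρ : ℝ) : Prop :=
  ∀ P, Supports W P → widthAt W P = ρ

/-- The spherical polar set `W° = ⋂_{P ∈ W} H(P)` (as a subset of the sphere). -/
def polar {n : ℕ} (W : Set (E n)) : Set (E n) :=
  {Q | ‖Q‖ = 1 ∧ ∀ P ∈ W, 0 ≤ ⟪P, Q⟫}

/-- The diameter of `W`: the supremum of geodesic distances between its points. -/
noncomputable def diam {n : ℕ} (W : Set (E n)) : ℝ :=
  sSup {d | ∃ P ∈ W, ∃ Q ∈ W, d = gdist P Q}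

/-- The spherical convex hull: normalized nonnegative convex combinations. -/
noncomputable def sconv {n : ℕ} (W : Set (E n)) : Set (E n) :=
  {X | ∃ (k : ℕ) (t : Fin k → ℝ) (f : Fin k → E n), (∀ i, f i ∈ W) ∧
    (∀ i, 0 ≤ t i) ∧ (∑ i, t i) = 1 ∧ X = nmz (∑ i, t i • f i)}

/-- Embedding `x ↦ (x, 1)` of `ℝ^{n+1}` into `ℝ^{n+2}`. -/
noncomputable def lift {n : ℕ} (x : EuclideanSpace ℝ (Fin (n + 1))) : E n :=
  (WithLp.equiv 2 (Fin (n + 2) → ℝ)).symm (Fin.snoc (fun i => x i) 1)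

/-- The north pole `N = (0, …, 0, 1)`. -/
noncomputable def north (n : ℕ) : E n := EuclideanSpace.single (Fin.last (n + 1)) 1

end Sph

open Sph

/-!
Identify `W` with the closed convex cone `C = ℝ≥0 • W` and `W°` with its inner dual cone
`K = C*`; centres of supporting hemispheres are the normalised boundary rays of `K`. Width `π / 2`
at every supporting hemisphere `H(P)` means: any two supporting centres are at distance at most
`π / 2`, and `P` has a supporting centre orthogonal to it. Both follow at once from `W = W°`.

Conversely, Farkas' lemma shows that a unit vector outside `W` is cut off by a supporting
hemisphere. A supporting centre outside `W` would thus make an obtuse angle with another one, so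
all supporting centres lie in `W`, whence `W° ⊆ W`, i.e. `K ⊆ C`. The orthogonal partner of a
supporting centre `P` gives a hyperplane through `P` supporting `C`, so no boundary point of `K`
is interior to `C`. The interior of `C` is connected and meets `K`, hence lies in `K`, and so
`C ⊆ K`, i.e. `W ⊆ W°`.
-/

open Filter Topology

theorem IsPreconnected.subset_interior_of_disjoint_frontier {X : Type*} [TopologicalSpace X]
    {s K : Set X} (hs : IsPreconnected s) (hsK : (s ∩ K).Nonempty)
    (hfr : Disjoint s (frontier K)) : s ⊆ interior K := by
  have hint : s ∩ closure K ⊆ interior K := fun x hx => by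
    by_contra h
    exact hfr.ne_of_mem hx.1 ⟨hx.2, h⟩ rfl
  obtain ⟨x, hxs, hxK⟩ := hsK
  refine hs.subset_of_closure_inter_subset isOpen_interior
    ⟨x, hxs, hint ⟨hxs, subset_closure hxK⟩⟩ fun y hy => hint ⟨hy.2, ?_⟩
  exact closure_mono interior_subset hy.1

theorem Convex.subset_of_disjoint_frontier {V : Type*} [NormedAddCommGroup V] [NormedSpace ℝ V]
    {C K : Set V} (hC : Convex ℝ C) (hK : IsClosed K) (hCK : (interior C ∩ K).Nonempty)
    (hfr : Disjoint (interior C) (frontier K)) : C ⊆ K := by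
  have hint : interior C ⊆ K :=
    (hC.interior.isPreconnected.subset_interior_of_disjoint_frontier hCK hfr).trans
      interior_subset
  calc C ⊆ closure (interior C) := by
        rw [hC.closure_interior_eq_closure_of_nonempty_interior (hCK.mono Set.inter_subset_left)]
        exact subset_closure
    _ ⊆ K := closure_minimal hint hK

section InnerDual

variable {F : Type*} [NormedAddCommGroup F] [InnerProductSpace ℝ F]

theorem isOpen_setOf_forall_inner_pos {W : Set F} (hW : IsCompact W) :
    IsOpen {v : F | ∀ w ∈ W, 0 < ⟪w, v⟫} :=
  isOpen_iff_mem_nhds.mpr fun _ hv => hW.eventually_forall_of_forall_eventually fun w hw =>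
    (continuous_snd.inner continuous_fst).continuousAt.eventually (lt_mem_nhds (hv w hw))

theorem notMem_interior_of_inner_eq_zero {S : Set F} {Q v : F} (hQ : Q ≠ 0)
    (hS : ∀ c ∈ S, 0 ≤ ⟪Q, c⟫) (hv : ⟪Q, v⟫ = 0) : v ∉ interior S := by
  intro hvS
  have hlim : Tendsto (fun t : ℝ => v - t • Q) (𝓝[>] 0) (𝓝 v) := by
    have : Continuous (fun t : ℝ => v - t • Q) := by fun_prop
    simpa using (this.tendsto 0).mono_left nhdsWithin_le_nhds
  obtain ⟨t, htS, ht⟩ :=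
    ((hlim.eventually (mem_interior_iff_mem_nhds.mp hvS)).and self_mem_nhdsWithin).exists
  have hQt := hS _ htS
  rw [inner_sub_right, hv, real_inner_smul_right, real_inner_self_eq_norm_sq] at hQt
  have : 0 < ‖Q‖ ^ 2 := by positivity
  nlinarith

variable [CompleteSpace F]

theorem ProperCone.inner_nonneg_of_mem_hull {W : Set F} {Q c : F}
    (hQ : Q ∈ ProperCone.innerDual W) (hc : c ∈ PointedCone.hull ℝ W) : 0 ≤ ⟪Q, c⟫ :=
  (Submodule.span_le (p := (ProperCone.innerDual (ProperCone.innerDual W : Set F)).toSubmodule).2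
    (fun _ hw Q hQ => by simpa [real_inner_comm] using hQ hw) hc) hQ

theorem ProperCone.exists_inner_eq_zero_of_mem_frontier_innerDual {W : Set F} (hW : IsCompact W)
    {v : F} (hv : v ∈ frontier (ProperCone.innerDual W : Set F)) :
    v ∈ ProperCone.innerDual W ∧ ∃ w ∈ W, ⟪w, v⟫ = 0 := by
  have hvK : v ∈ ProperCone.innerDual W := (ProperCone.isClosed _).frontier_subset hv
  refine ⟨hvK, ?_⟩
  by_contra! hpos
  have hpos_sub : {u : F | ∀ w ∈ W, 0 < ⟪w, u⟫} ⊆ ProperCone.innerDual W :=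
    fun u hu w hw => (hu w hw).le
  refine hv.2 (interior_mono hpos_sub (mem_interior_iff_mem_nhds.2 ?_))
  exact (isOpen_setOf_forall_inner_pos hW).mem_nhds fun w hw => (hvK hw).lt_of_ne' (hpos w hw)

end InnerDual

namespace Sph

variable {n : ℕ} {W : Set (E n)}

lemma sph_eq_sphere : sph n = Metric.sphere 0 1 := by
  ext x
  simp [sph]

lemma isCompact_of_subset_sph (hcl : IsClosed W) (hsub : W ⊆ sph n) : IsCompact W :=
  (isCompact_sphere (0 : E n) 1).of_isClosed_subset hcl (sph_eq_sphere ▸ hsub)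

lemma ne_zero_of_mem_sph {x : E n} (hx : x ∈ sph n) : x ≠ 0 :=
  ne_zero_of_norm_ne_zero (by rw [show ‖x‖ = 1 from hx]; exact one_ne_zero)

lemma norm_nmz {x : E n} (hx : x ≠ 0) : ‖nmz x‖ = 1 := norm_smul_inv_norm hx

lemma nmz_of_norm_eq_one {x : E n} (hx : ‖x‖ = 1) : nmz x = x := by
  simp [nmz, hx]

lemma nmz_smul {a : ℝ} (ha : 0 < a) (x : E n) : nmz (a • x) = nmz x := by
  rw [nmz, nmz, norm_smul, Real.norm_of_nonneg ha.le, smul_smul, mul_inv, mul_right_comm,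
    inv_mul_cancel₀ ha.ne', one_mul]

lemma norm_smul_nmz (x : E n) : ‖x‖ • nmz x = x := by
  rcases eq_or_ne x 0 with rfl | hx
  · simp
  · exact smul_inv_smul₀ (norm_ne_zero_iff.2 hx) x

lemma inner_nmz_right (y x : E n) : ⟪y, nmz x⟫ = ‖x‖⁻¹ * ⟪y, x⟫ := real_inner_smul_right _ _ _

lemma polar_eq : polar W = sph n ∩ ProperCone.innerDual W := rfl

lemma isCompact_polar : IsCompact (polar W) := by
  rw [polar_eq, sph_eq_sphere]
  exact (isCompact_sphere 0 1).inter_right (ProperCone.isClosed _)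

lemma nmz_mem_polar {v : E n} (hv : v ∈ ProperCone.innerDual W) (hv0 : v ≠ 0) :
    nmz v ∈ polar W :=
  ⟨norm_nmz hv0, fun u hu => by rw [inner_nmz_right]; exact mul_nonneg (by positivity) (hv hu)⟩

lemma mem_sphFrontier_of_inner_eq_zero {P w : E n} (hP : P ∈ polar W) (hw : w ∈ W)
    (hw1 : ‖w‖ = 1) (hwP : ⟪w, P⟫ = 0) : w ∈ sphFrontier W := by
  refine ⟨subset_closure hw, ?_⟩
  -- the great circle leaving `w` in the direction `-P` exits `H(P) ⊇ W` at once
  let γ : ℝ → E n := fun t => Real.cos t • w - Real.sin t • P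
  have hγ : Tendsto γ (𝓝[>] 0) (𝓝 w) := by
    have : Continuous γ := by fun_prop
    simpa [γ] using (this.tendsto 0).mono_left nhdsWithin_le_nhds
  refine mem_closure_of_tendsto hγ ?_
  filter_upwards [Ioo_mem_nhdsGT pi_pos] with t ht
  have hsin := sin_pos_of_pos_of_lt_pi ht.1 ht.2
  refine ⟨?_, fun hγW => ?_⟩
  · have hsq : ‖γ t‖ ^ 2 = 1 := by
      simp only [γ, norm_sub_sq_real, norm_smul, real_inner_smul_left, real_inner_smul_right,
        hwP, hw1, hP.1, Real.norm_eq_abs, mul_pow, sq_abs]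
      linarith [sin_sq_add_cos_sq t]
    exact (pow_eq_one_iff_of_nonneg (norm_nonneg _) two_ne_zero).1 hsq
  · have hγP := hP.2 _ hγW
    simp only [γ, inner_sub_left, real_inner_smul_left, hwP, real_inner_self_eq_norm_sq,
      hP.1] at hγP
    linarith

lemma supports_iff (hcl : IsClosed W) (hsub : W ⊆ sph n) {P : E n} :
    Supports W P ↔ P ∈ polar W ∧ ∃ w ∈ W, ⟪w, P⟫ = 0 := by
  constructor
  · rintro ⟨hP, hWP, w, ⟨hw, -⟩, -, hPw⟩
    exact ⟨⟨hP, fun u hu => real_inner_comm P u ▸ (hWP hu).2⟩, w, hcl.closure_subset hw,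
      real_inner_comm P w ▸ hPw⟩
  · rintro ⟨hP, w, hw, hwP⟩
    exact ⟨hP.1, fun u hu => ⟨hsub hu, real_inner_comm u P ▸ hP.2 u hu⟩, w,
      mem_sphFrontier_of_inner_eq_zero hP hw (hsub hw) hwP, hsub hw, real_inner_comm w P ▸ hwP⟩

lemma isCompact_setOf_supports (hcl : IsClosed W) (hsub : W ⊆ sph n) :
    IsCompact {P | Supports W P} := by
  have hdiff : {P | Supports W P} = polar W \ {v | ∀ w ∈ W, 0 < ⟪w, v⟫} := by
    ext P
    simp only [Set.mem_ofPred_eq, supports_iff hcl hsub, Set.mem_sdiff, not_forall, not_lt,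
      exists_prop]
    exact and_congr_right fun hP =>
      exists_congr fun w => and_congr_right fun hw => ⟨le_of_eq, fun h => h.antisymm (hP.2 w hw)⟩
  rw [hdiff]
  exact isCompact_polar.diff (isOpen_setOf_forall_inner_pos (isCompact_of_subset_sph hcl hsub))

lemma widthAt_eq_pi_div_two_iff (hS : IsCompact {Q | Supports W Q}) {P : E n} :
    widthAt W P = π / 2 ↔
      (∀ Q, Supports W Q → 0 ≤ ⟪P, Q⟫) ∧ ∃ Q, Supports W Q ∧ ⟪P, Q⟫ = 0 := by
  let f : E n → ℝ := fun Q => π - gdist P Q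
  have hf : Continuous f :=
    continuous_const.sub (continuous_arccos.comp (continuous_const.inner continuous_id))
  have hcpt : IsCompact (f '' {Q | Supports W Q}) := hS.image hf
  have hwidth : widthAt W P = sInf (f '' {Q | Supports W Q}) := by
    unfold widthAt
    congr 1
    ext d
    exact exists_congr fun Q => and_congr_right fun _ => eq_comm
  have hle : ∀ Q, π / 2 ≤ f Q ↔ 0 ≤ ⟪P, Q⟫ := fun Q => by
    rw [← arccos_le_pi_div_two]
    simp only [f, gdist]
    constructor <;> intro <;> linarith
  have heq : ∀ Q, f Q = π / 2 ↔ ⟪P, Q⟫ = 0 := fun Q => by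
    rw [← arccos_eq_pi_div_two]
    simp only [f, gdist]
    constructor <;> intro <;> linarith
  rw [hwidth]
  constructor
  · intro h
    have hne : (f '' {Q | Supports W Q}).Nonempty := by
      by_contra hemp
      rw [Set.not_nonempty_iff_eq_empty.1 hemp, Real.sInf_empty] at h
      linarith [pi_pos]
    obtain ⟨Q, hQ, hQeq⟩ := h ▸ hcpt.sInf_mem hne
    exact ⟨fun Q hQ => (hle Q).1 (h ▸ csInf_le hcpt.bddBelow ⟨Q, hQ, rfl⟩), Q, hQ,
      (heq Q).1 hQeq⟩
  · rintro ⟨hpos, Q, hQ, hPQ⟩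
    refine le_antisymm ((heq Q).2 hPQ ▸ csInf_le hcpt.bddBelow ⟨Q, hQ, rfl⟩) ?_
    exact le_csInf ⟨_, Q, hQ, rfl⟩ fun _ ⟨Q', hQ', hd⟩ => hd ▸ (hle Q').2 (hpos Q' hQ')

lemma constWidth_pi_div_two_iff (hcl : IsClosed W) (hsub : W ⊆ sph n) :
    ConstWidth W (π / 2) ↔ ∀ P, Supports W P →
      (∀ Q, Supports W Q → 0 ≤ ⟪P, Q⟫) ∧ ∃ Q, Supports W Q ∧ ⟪P, Q⟫ = 0 :=
  forall₂_congr fun _ _ => widthAt_eq_pi_div_two_iff (isCompact_setOf_supports hcl hsub)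

lemma nmz_add_mem (hW : SphConvex W) {c₁ c₂ : E n} (h₁ : nmz c₁ ∈ W) (h₂ : nmz c₂ ∈ W) :
    nmz (c₁ + c₂) ∈ W := by
  rcases (add_nonneg (norm_nonneg c₁) (norm_nonneg c₂)).eq_or_lt with hab | hab
  · obtain rfl : c₁ = 0 := norm_eq_zero.1 (by linarith [norm_nonneg c₁, norm_nonneg c₂])
    rwa [zero_add]
  set t := ‖c₂‖ / (‖c₁‖ + ‖c₂‖) with ht_def
  have ht : t ∈ Set.Icc (0 : ℝ) 1 :=
    ⟨div_nonneg (norm_nonneg _) hab.le, div_le_one_of_le₀ (by linarith [norm_nonneg c₁]) hab.le⟩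
  have e₁ : (‖c₁‖ + ‖c₂‖) * (1 - t) = ‖c₁‖ := by rw [ht_def]; field_simp; ring
  have e₂ : (‖c₁‖ + ‖c₂‖) * t = ‖c₂‖ := by rw [ht_def]; field_simp
  have hsum : c₁ + c₂ = (‖c₁‖ + ‖c₂‖) • ((1 - t) • nmz c₁ + t • nmz c₂) := by
    rw [smul_add, smul_smul, smul_smul, e₁, e₂, norm_smul_nmz, norm_smul_nmz]
  rw [hsum, nmz_smul hab]
  exact hW.2 _ h₁ _ h₂ ⟨t, ht, rfl⟩

lemma mem_hull_iff (hW : SphConvex W) {c : E n} (hc : c ≠ 0) :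
    c ∈ PointedCone.hull ℝ W ↔ nmz c ∈ W := by
  refine ⟨fun h => ?_, fun h => ?_⟩
  · suffices ∀ d ∈ PointedCone.hull ℝ W, d = 0 ∨ nmz d ∈ W from (this c h).resolve_left hc
    intro d hd
    induction hd using Submodule.span_induction with
    | mem w hw => exact .inr ((nmz_of_norm_eq_one (hW.1 hw)).symm ▸ hw)
    | zero => exact .inl rfl
    | add c₁ c₂ _ _ h₁ h₂ =>
      rcases h₁ with rfl | h₁
      · rwa [zero_add]
      rcases h₂ with rfl | h₂
      · rw [add_zero]; exact .inr h₁
      exact .inr (nmz_add_mem hW h₁ h₂)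
    | smul a c _ h =>
      rw [← Nonneg.coe_smul]
      rcases a.2.eq_or_lt with ha | ha
      · exact .inl (by rw [← ha, zero_smul])
      rw [nmz_smul ha]
      exact h.imp (fun hd => by rw [hd, smul_zero]) id
  · rw [← norm_smul_nmz c]
    exact (PointedCone.hull ℝ W).smul_mem (norm_nonneg c) (PointedCone.subset_hull h)

lemma isClosed_hull (hcl : IsClosed W) (hW : SphConvex W) :
    IsClosed (PointedCone.hull ℝ W : Set (E n)) := by
  refine isClosed_of_closure_subset fun c hc => ?_
  rcases eq_or_ne c 0 with rfl | hc0
  · exact zero_mem _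
  have hcont : ContinuousAt (nmz (n := n)) c :=
    (continuous_norm.continuousAt.inv₀ (norm_ne_zero_iff.2 hc0)).smul continuousAt_id
  have hmaps : nmz '' (PointedCone.hull ℝ W : Set (E n)) ⊆ insert 0 W := by
    rintro _ ⟨d, hd, rfl⟩
    rcases eq_or_ne d 0 with rfl | hd0
    · exact .inl (by simp [nmz])
    · exact .inr ((mem_hull_iff hW hd0).1 hd)
  have hclosed : IsClosed (insert 0 W) := by
    rw [Set.insert_eq]; exact isClosed_singleton.union hcl
  refine (mem_hull_iff hW hc0).2 ?_
  refine (closure_minimal hmaps hclosed (mem_closure_image hcont hc)).resolve_left fun h => ?_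
  simpa [h] using norm_nmz hc0

lemma supports_nmz_of_mem_frontier (hcl : IsClosed W) (hsub : W ⊆ sph n) {v : E n}
    (hv : v ∈ frontier (ProperCone.innerDual W : Set (E n))) (hv0 : v ≠ 0) :
    Supports W (nmz v) := by
  obtain ⟨hvK, w, hw, hwv⟩ :=
    ProperCone.exists_inner_eq_zero_of_mem_frontier_innerDual (isCompact_of_subset_sph hcl hsub) hv
  exact (supports_iff hcl hsub).2
    ⟨nmz_mem_polar hvK hv0, w, hw, by rw [inner_nmz_right, hwv, mul_zero]⟩

lemma exists_supports_inner_neg (hcl : IsClosed W) (hW : SphConvex W) {x w : E n}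
    (hx : ‖x‖ = 1) (hxW : x ∉ W) (hw : w ∈ W) (hwx : -1 < ⟪w, x⟫) :
    ∃ P, Supports W P ∧ ⟪x, P⟫ < 0 := by
  let K : Set (E n) := ProperCone.innerDual W
  let C : ProperCone ℝ (E n) := ⟨PointedCone.hull ℝ W, isClosed_hull hcl hW⟩
  have hxC : x ∉ C := fun h =>
    hxW (nmz_of_norm_eq_one hx ▸ (mem_hull_iff hW (ne_zero_of_mem_sph hx)).1 h)
  obtain ⟨y, hyC, hxy⟩ := C.hyperplane_separation' hxC
  have hyK : y ∈ K := fun u hu => hyC u (PointedCone.subset_hull hu)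
  -- `w` cuts `q` off from `K` while `⟪x, q⟫ < 0` as for `y`, so the segment from `y` to `q`
  -- leaves `K` through a boundary ray on the negative side of `x`
  let q : E n := -(x + w)
  have hqK : q ∉ K := fun h => by
    have hwq : 0 ≤ ⟪w, q⟫ := h hw
    have hw1 : ‖w‖ = 1 := hW.1 hw
    simp only [q, inner_neg_right, inner_add_right, real_inner_self_eq_norm_sq, hw1] at hwq
    linarith
  have hxq : ⟪x, q⟫ < 0 := by
    simp only [q, inner_neg_right, inner_add_right, real_inner_self_eq_norm_sq, hx,
      real_inner_comm w x] at hwx ⊢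
    linarith
  have hseg : segment ℝ y q ⊆ {v | ⟪x, v⟫ < 0} :=
    (convex_halfSpace_lt (innerₛₗ ℝ x).isLinear 0).segment_subset hxy hxq
  obtain ⟨v, hv, hvK⟩ : (segment ℝ y q ∩ frontier K).Nonempty := by
    rw [← Set.not_disjoint_iff_nonempty_inter]
    intro hdisj
    refine hqK (interior_subset ?_)
    exact (convex_segment y q).isPreconnected.subset_interior_of_disjoint_frontier
      ⟨y, left_mem_segment ℝ y q, hyK⟩ hdisj (right_mem_segment ℝ y q)
  have hxv : ⟪x, v⟫ < 0 := hseg hv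
  have hv0 : v ≠ 0 := by rintro rfl; simp at hxv
  refine ⟨nmz v, supports_nmz_of_mem_frontier hcl hW.1 hvK hv0, ?_⟩
  rw [inner_nmz_right]
  exact mul_neg_of_pos_of_neg (by positivity) hxv

lemma mem_of_supports (hcl : IsClosed W) (hW : SphConvex W)
    (hpair : ∀ P, Supports W P → ∀ Q, Supports W Q → 0 ≤ ⟪P, Q⟫) {P : E n}
    (hP : Supports W P) : P ∈ W := by
  by_contra hPW
  obtain ⟨-, X, hX, hXP⟩ := (supports_iff hcl hW.1).1 hP
  obtain ⟨Q, hQ, hPQ⟩ := exists_supports_inner_neg hcl hW hP.1 hPW hX (by rw [hXP]; norm_num)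
  exact (hpair P hP Q hQ).not_gt hPQ

lemma polar_subset (hcl : IsClosed W) (hW : SphConvex W) (hne : W.Nonempty)
    (hpair : ∀ P, Supports W P → ∀ Q, Supports W Q → 0 ≤ ⟪P, Q⟫) : polar W ⊆ W := by
  intro q hq
  by_contra hqW
  obtain ⟨w, hw⟩ := hne
  obtain ⟨P, hP, hqP⟩ :=
    exists_supports_inner_neg hcl hW hq.1 hqW hw (by linarith [hq.2 w hw])
  exact hqP.not_ge (real_inner_comm q P ▸ hq.2 P (mem_of_supports hcl hW hpair hP))

lemma exists_mem_interior_innerDual (hcl : IsClosed W) (hsub : W ⊆ sph n)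
    (hW : Hemispherical W) : ∃ R ∈ sph n, R ∈ interior (ProperCone.innerDual W : Set (E n)) := by
  obtain ⟨R, hR1, hR⟩ := hW
  refine ⟨-R, by simpa [sph] using hR1, interior_mono (fun v hv w hw => (hv w hw).le)
    (mem_interior_iff_mem_nhds.2 ((isOpen_setOf_forall_inner_pos
      (isCompact_of_subset_sph hcl hsub)).mem_nhds fun w hw => ?_))⟩
  rw [inner_neg_right, neg_pos, real_inner_comm]
  by_contra! h
  exact hR.subset ⟨hw, hsub hw, h⟩

lemma innerDual_subset_hull (hW : SphConvex W) (hpolar : polar W ⊆ W) :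
    (ProperCone.innerDual W : Set (E n)) ⊆ PointedCone.hull ℝ W := fun v hv => by
  rcases eq_or_ne v 0 with rfl | hv0
  · exact zero_mem _
  exact (mem_hull_iff hW hv0).2 (hpolar (nmz_mem_polar hv hv0))

lemma subset_polar (hcl : IsClosed W) (hW : SphConvex W) (hhem : Hemispherical W)
    (hpolar : polar W ⊆ W) (hmate : ∀ P, Supports W P → ∃ Q, Supports W Q ∧ ⟪P, Q⟫ = 0) :
    W ⊆ polar W := by
  let K : Set (E n) := ProperCone.innerDual W
  let C : Set (E n) := PointedCone.hull ℝ W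
  obtain ⟨R, hR1, hRK⟩ := exists_mem_interior_innerDual hcl hW.1 hhem
  have hnormal : ∀ Q ∈ sph n, Q ∈ K → ∀ v, ⟪Q, v⟫ = 0 → v ∉ interior C := fun Q hQ1 hQK _ =>
    notMem_interior_of_inner_eq_zero (ne_zero_of_mem_sph hQ1)
      fun _ hc => ProperCone.inner_nonneg_of_mem_hull hQK hc
  -- a boundary ray `v ≠ 0` of `K` lies on the supporting hyperplane `Q⊥` of `C`, where `Q` is
  -- the orthogonal mate of the supporting centre `nmz v`
  have hfr : Disjoint (interior C) (frontier K) := by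
    refine Set.disjoint_right.2 fun v hv => ?_
    rcases eq_or_ne v 0 with rfl | hv0
    · exact hnormal R hR1 (interior_subset hRK) 0 (inner_zero_right _)
    obtain ⟨Q, hQ, hvQ⟩ := hmate _ (supports_nmz_of_mem_frontier hcl hW.1 hv hv0)
    refine hnormal Q hQ.1 ((supports_iff hcl hW.1).1 hQ).1.2 v ?_
    rw [← norm_smul_nmz v, real_inner_smul_right, real_inner_comm, hvQ, mul_zero]
  have hCK : C ⊆ K := (PointedCone.hull ℝ W).convex.subset_of_disjoint_frontier
    (ProperCone.isClosed _)
    ⟨R, interior_mono (innerDual_subset_hull hW hpolar) hRK, interior_subset hRK⟩ hfr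
  exact fun w hw => ⟨hW.1 hw, hCK (PointedCone.subset_hull hw)⟩

lemma constWidth_of_eq_polar (hcl : IsClosed W) (hsub : W ⊆ sph n) (h : W = polar W) :
    ConstWidth W (π / 2) := by
  rw [constWidth_pi_div_two_iff hcl hsub]
  intro P hP
  obtain ⟨hPpol, X, hX, hXP⟩ := (supports_iff hcl hsub).1 hP
  have hPW : P ∈ W := by rwa [h]
  refine ⟨fun Q hQ => ((supports_iff hcl hsub).1 hQ).1.2 P hPW, X, ?_, real_inner_comm X P ▸ hXP⟩
  exact (supports_iff hcl hsub).2 ⟨h ▸ hX, P, hPW, real_inner_comm X P ▸ hXP⟩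

end Sph

theorem self_polar_iff_constant_width {n : ℕ} (W : Set (E n))
    (hW : SphConvexBody W) :
    W = polar W ↔ ConstWidth W (π / 2) := by
  obtain ⟨hcl, hhem, hconv, ⟨w, hw, -⟩⟩ := hW
  refine ⟨constWidth_of_eq_polar hcl hconv.1, fun h => ?_⟩
  rw [constWidth_pi_div_two_iff hcl hconv.1] at h
  have hpolar : polar W ⊆ W := polar_subset hcl hconv ⟨w, hw⟩ fun P hP => (h P hP).1
  exact (subset_polar hcl hconv hhem hpolar fun P hP => (h P hP).2).antisymm hpolar
end

section
/- If a spherical convex body W in S^{n+1} has constant width π/2, then the diameter of W is at most π/2, and consequently W ⊆ W° (every point of W lies in the hemisphere centered at any other point of W). -/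
open scoped RealInnerProductSpace BigOperators
open Real

open Sph

namespace CW

open Set

variable {n : ℕ}

lemma nmz_norm {x : E n} (hx : x ≠ 0) : ‖nmz x‖ = 1 := by
  simp [nmz, norm_smul, abs_of_nonneg, inv_mul_cancel₀ (norm_ne_zero_iff.mpr hx)]

lemma nmz_unit {x : E n} (hx : ‖x‖ = 1) : nmz x = x := by
  simp [nmz, hx]

lemma inner_nmz (u : E n) (x : E n) : ⟪u, nmz x⟫ = ‖x‖⁻¹ * ⟪u, x⟫ :=
  real_inner_smul_right _ _ _

lemma nmz_perturb_dist {Y u : E n} (hY : ‖Y‖ = 1) (hu : ‖u‖ = 1) {s : ℝ}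
    (hs0 : 0 ≤ s) (hs : s ≤ 1/2) :
    1/2 ≤ ‖Y - s • u‖ ∧ ‖nmz (Y - s • u) - Y‖ ≤ 4 * s := by
  have hsu : ‖s • u‖ = s := by simp [norm_smul, hu, abs_of_nonneg hs0]
  have h1 : 1 - s ≤ ‖Y - s • u‖ := by
    have := norm_sub_norm_le Y (s • u)
    rw [hY, hsu] at this; linarith
  have hr2 : (1:ℝ)/2 ≤ ‖Y - s • u‖ := by linarith
  refine ⟨hr2, ?_⟩
  set r := ‖Y - s • u‖ with hr
  have hrpos : 0 < r := by linarith
  have key : nmz (Y - s • u) - Y = r⁻¹ • ((Y - s • u) - r • Y) := by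
    rw [smul_sub, smul_smul, inv_mul_cancel₀ hrpos.ne', one_smul]; rfl
  have h2 : |r - 1| ≤ s := by
    have h := abs_norm_sub_norm_le (Y - s • u) Y
    rw [hY, sub_sub_cancel_left, norm_neg, hsu] at h
    exact h
  have h3 : ‖(Y - s • u) - r • Y‖ ≤ 2 * s := by
    have he : (Y - s • u) - r • Y = (1 - r) • Y - s • u := by
      rw [sub_smul, one_smul]; abel
    rw [he]
    calc ‖(1 - r) • Y - s • u‖ ≤ ‖(1-r) • Y‖ + ‖s • u‖ := norm_sub_le _ _
    _ ≤ 2 * s := by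
        rw [norm_smul, hY, hsu, mul_one]
        have : |1 - r| ≤ s := by rwa [abs_sub_comm] at h2
        simp only [Real.norm_eq_abs]; linarith
  rw [key, norm_smul, norm_inv, Real.norm_eq_abs, abs_of_pos hrpos]
  calc r⁻¹ * ‖(Y - s•u) - r • Y‖ ≤ r⁻¹ * (2*s) :=
        mul_le_mul_of_nonneg_left h3 (inv_nonneg.mpr hrpos.le)
  _ ≤ 2 * (2*s) := by
      have : r⁻¹ ≤ 2 := by
        rw [inv_le_comm₀ hrpos (by norm_num)]; linarith
      nlinarith
  _ = 4 * s := by ring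

noncomputable def mnf (W : Set (E n)) (u : E n) : ℝ := sInf ((fun Y => ⟪u, Y⟫) '' W)

lemma mnf_bdd (W : Set (E n)) (hsub : ∀ Y ∈ W, ‖Y‖ = 1) (u : E n) :
    BddBelow ((fun Y => ⟪u, Y⟫) '' W) := by
  refine ⟨-‖u‖, ?_⟩
  rintro _ ⟨Y, hY, rfl⟩
  have h := abs_real_inner_le_norm u Y
  rw [hsub Y hY, mul_one] at h
  have := abs_le.mp h
  linarith [this.1]

lemma mnf_le {W : Set (E n)} (hsub : ∀ Y ∈ W, ‖Y‖ = 1) {u : E n} {Y : E n} (hY : Y ∈ W) :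
    mnf W u ≤ ⟪u, Y⟫ := csInf_le (mnf_bdd W hsub u) ⟨Y, hY, rfl⟩

lemma le_mnf {W : Set (E n)} (hne : W.Nonempty) {u : E n} {c : ℝ}
    (h : ∀ Y ∈ W, c ≤ ⟪u, Y⟫) : c ≤ mnf W u := by
  apply le_csInf (hne.image _)
  rintro _ ⟨Y, hY, rfl⟩; exact h Y hY

lemma mnf_attained {W : Set (E n)} (hWc : IsCompact W) (hne : W.Nonempty) (u : E n) :
    ∃ Y ∈ W, ⟪u, Y⟫ = mnf W u := by
  have hc : Continuous fun Y : E n => ⟪u, Y⟫ := continuous_const.inner continuous_id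
  obtain ⟨Y, hY, hEq⟩ := (hWc.image hc).sInf_mem (hne.image _)
  exact ⟨Y, hY, hEq⟩

lemma mnf_continuous {W : Set (E n)} (hsub : ∀ Y ∈ W, ‖Y‖ = 1) (hne : W.Nonempty) :
    Continuous (mnf W) := by
  have lip : LipschitzWith 1 (mnf W) := by
    apply LipschitzWith.of_dist_le_mul
    intro u v
    rw [NNReal.coe_one, one_mul, Real.dist_eq]
    have key : ∀ a b : E n, mnf W b - dist a b ≤ mnf W a := by
      intro a b
      apply le_mnf hne
      intro Y hY
      have h1 : mnf W b ≤ ⟪b, Y⟫ := mnf_le hsub hY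
      have h2 : ⟪b, Y⟫ - ⟪a, Y⟫ ≤ dist a b := by
        have h3 : ⟪b, Y⟫ - ⟪a, Y⟫ = ⟪b - a, Y⟫ := by rw [inner_sub_left]
        rw [h3]
        calc ⟪b - a, Y⟫ ≤ ‖b - a‖ * ‖Y‖ := real_inner_le_norm _ _
        _ = dist a b := by rw [hsub Y hY, mul_one, dist_comm, dist_eq_norm]
      linarith
    rw [abs_le]
    constructor
    · linarith [key u v]
    · have := key v u; rw [dist_comm] at this; linarith
  exact lip.continuous

end CW

namespace CW

variable {n : ℕ} {W : Set (E n)}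

lemma supports_of_mnf_zero (hcl : IsClosed W) (hsub : ∀ Y ∈ W, ‖Y‖ = 1)
    (hWc : IsCompact W) (hne : W.Nonempty) {u : E n} (hu : ‖u‖ = 1)
    (h0 : mnf W u = 0) : Supports W u := by
  have hhemi : W ⊆ hemi u := by
    intro Y hY
    exact ⟨hsub Y hY, h0 ▸ mnf_le hsub hY⟩
  obtain ⟨Y₀, hY₀, hmin⟩ := mnf_attained hWc hne u
  rw [h0] at hmin
  refine ⟨hu, hhemi, Y₀, ⟨subset_closure hY₀, ?_⟩, hsub Y₀ hY₀, hmin⟩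
  -- Y₀ ∈ closure (sph n \ W)
  rw [Metric.mem_closure_iff]
  intro ε hε
  set s : ℝ := min (ε/5) (1/2) with hs
  have hs0 : 0 < s := lt_min (by linarith) (by norm_num)
  have hs2 : s ≤ 1/2 := min_le_right _ _
  obtain ⟨hlb, hdist⟩ := nmz_perturb_dist (hsub Y₀ hY₀) hu hs0.le hs2
  set b := nmz (Y₀ - s • u) with hb
  have hbne : Y₀ - s • u ≠ 0 := by
    intro h; rw [h] at hlb; simp at hlb; linarith
  have hbnorm : ‖b‖ = 1 := nmz_norm hbne
  have hbinner : ⟪u, b⟫ < 0 := by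
    rw [hb, inner_nmz, inner_sub_right, real_inner_smul_right, hmin,
      real_inner_self_eq_norm_sq, hu]
    have : (0:ℝ) - s * 1 ^ 2 < 0 := by nlinarith
    have hpos : 0 < ‖Y₀ - s • u‖⁻¹ := by positivity
    nlinarith
  refine ⟨b, ⟨hbnorm, fun hbW => ?_⟩, ?_⟩
  · exact absurd (hhemi hbW).2 (not_le.mpr hbinner)
  · rw [dist_comm, dist_eq_norm]
    calc ‖b - Y₀‖ ≤ 4 * s := hdist
    _ ≤ 4 * (ε/5) := by nlinarith [min_le_left (ε/5) (1/2)]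
    _ < ε := by linarith

lemma cap_inner_ge {N : E n} {ρ : ℝ}
    (hcap : ∀ Y : E n, ‖Y‖ = 1 → dist Y N < ρ → Y ∈ W) (hN : ‖N‖ = 1) (hρ : 0 < ρ)
    {C : E n} (hC : ‖C‖ = 1) (hCW : ∀ Y ∈ W, 0 ≤ ⟪C, Y⟫) :
    min (ρ/5) (1/2) ≤ ⟪C, N⟫ := by
  set s : ℝ := min (ρ/5) (1/2) with hs
  have hs0 : 0 < s := lt_min (by linarith) (by norm_num)
  have hs2 : s ≤ 1/2 := min_le_right _ _
  obtain ⟨hlb, hdist⟩ := nmz_perturb_dist hN hC hs0.le hs2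
  set N' := nmz (N - s • C) with hN'
  have hne0 : N - s • C ≠ 0 := by
    intro h; rw [h] at hlb; simp at hlb; linarith
  have hN'W : N' ∈ W := by
    apply hcap N' (nmz_norm hne0)
    rw [dist_eq_norm]
    calc ‖N' - N‖ ≤ 4 * s := hdist
    _ ≤ 4 * (ρ/5) := by nlinarith [min_le_left (ρ/5) (1/2)]
    _ < ρ := by linarith
  have h1 : 0 ≤ ⟪C, N'⟫ := hCW N' hN'W
  rw [hN', inner_nmz, inner_sub_right, real_inner_smul_right,
    real_inner_self_eq_norm_sq, hC] at h1
  have hpos : 0 < ‖N - s • C‖⁻¹ := by positivity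
  nlinarith

lemma no_all_ortho {N : E n} {ρ : ℝ}
    (hcap : ∀ Y : E n, ‖Y‖ = 1 → dist Y N < ρ → Y ∈ W) (hN : ‖N‖ = 1) (hρ : 0 < ρ)
    (hNW : N ∈ W) {u : E n} (hu : ‖u‖ = 1)
    (hA : ∀ Y ∈ W, 0 ≤ ⟪u, Y⟫) (hB : ∀ Y ∈ W, 0 ≤ ⟪-u, Y⟫) : False := by
  have h0 : ∀ Y ∈ W, ⟪u, Y⟫ = 0 := by
    intro Y hY
    have := hB Y hY
    rw [inner_neg_left] at this
    linarith [hA Y hY]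
  have := cap_inner_ge hcap hN hρ hu (fun Y hY => (h0 Y hY).ge)
  rw [h0 N hNW] at this
  have : (0:ℝ) < min (ρ/5) (1/2) := lt_min (by linarith) (by norm_num)
  linarith [cap_inner_ge hcap hN hρ hu (fun Y hY => (h0 Y hY).ge), h0 N hNW]

lemma width_bddBelow (W : Set (E n)) (C : E n) :
    BddBelow {d | ∃ Q, Supports W Q ∧ d = π - gdist C Q} := by
  refine ⟨0, ?_⟩
  rintro _ ⟨Q, _, rfl⟩
  have := Real.arccos_le_pi ⟪C, Q⟫
  unfold gdist; linarith

lemma width_pair (hcw : ConstWidth W (π/2)) {C C' : E n}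
    (hC : Supports W C) (hC' : Supports W C') : 0 ≤ ⟪C, C'⟫ := by
  have hw := hcw C hC
  unfold widthAt at hw
  have hle : sInf {d | ∃ Q, Supports W Q ∧ d = π - gdist C Q} ≤ π - gdist C C' :=
    csInf_le (width_bddBelow W C) ⟨C', hC', rfl⟩
  rw [hw] at hle
  have : gdist C C' ≤ π/2 := by linarith
  exact Real.arccos_le_pi_div_two.mp this

lemma width_exists_far (hcw : ConstWidth W (π/2)) {C : E n}
    (hC : Supports W C) (hCn : ‖C‖ = 1) {κ : ℝ} (hκ : 0 < κ) :
    ∃ C', Supports W C' ∧ ⟪C, C'⟫ < κ := by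
  set κ' : ℝ := min κ 1 with hκ'
  have hκ'0 : 0 < κ' := lt_min hκ (by norm_num)
  have hκ'1 : κ' ≤ 1 := min_le_right _ _
  have hw := hcw C hC
  unfold widthAt at hw
  have hne : {d | ∃ Q, Supports W Q ∧ d = π - gdist C Q}.Nonempty := by
    refine ⟨π - gdist C C, C, hC, rfl⟩
  have hlt : sInf {d | ∃ Q, Supports W Q ∧ d = π - gdist C Q} < π/2 + κ' := by
    rw [hw]; linarith
  obtain ⟨d, ⟨C', hC', rfl⟩, hdlt⟩ := exists_lt_of_csInf_lt hne hlt
  refine ⟨C', hC', ?_⟩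
  set x := ⟪C, C'⟫ with hx
  have hC'n : ‖C'‖ = 1 := hC'.1
  have hxabs : |x| ≤ 1 := by
    have := abs_real_inner_le_norm C C'
    rwa [hCn, hC'n, mul_one] at this
  have hx1 := (abs_le.mp hxabs).2
  have hxm1 := (abs_le.mp hxabs).1
  have harc : π/2 - κ' < Real.arccos x := by unfold gdist at hdlt; linarith
  have hup : Real.arccos x ≤ π := Real.arccos_le_pi x
  have hlow : 0 ≤ π/2 - κ' := by nlinarith [Real.pi_gt_three]
  have hcos : Real.cos (Real.arccos x) < Real.cos (π/2 - κ') := by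
    apply Real.cos_lt_cos_of_nonneg_of_le_pi hlow hup harc
  rw [Real.cos_arccos hxm1 hx1, Real.cos_pi_div_two_sub] at hcos
  have hsin : Real.sin κ' ≤ κ' := Real.sin_le hκ'0.le
  calc x < Real.sin κ' := hcos
  _ ≤ κ' := hsin
  _ ≤ κ := min_le_left _ _

end CW

namespace CW

variable {n : ℕ} {W : Set (E n)}

set_option maxHeartbeats 2000000 in
/-- Any two unit vectors in the dual cone of `W` make an angle at most `π/2`,
for a body of constant width `π/2`. -/
lemma vp (hcl : IsClosed W) (hsub : ∀ Y ∈ W, ‖Y‖ = 1) (hWc : IsCompact W)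
    (hne : W.Nonempty) {N : E n} {ρ : ℝ}
    (hcap : ∀ Y : E n, ‖Y‖ = 1 → dist Y N < ρ → Y ∈ W) (hN : ‖N‖ = 1) (hρ : 0 < ρ)
    (hNW : N ∈ W) (hcw : ConstWidth W (π/2))
    {v v' : E n} (hv : ‖v‖ = 1) (hv' : ‖v'‖ = 1)
    (h1 : 0 ≤ mnf W v) (h2 : 0 ≤ mnf W v') : 0 ≤ ⟪v, v'⟫ := by
  by_contra hcon
  push_neg at hcon
  set c := ⟪v, v'⟫ with hc
  have hxabs : |c| ≤ 1 := by
    have := abs_real_inner_le_norm v v'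
    rwa [hv, hv', mul_one] at this
  have hcm1 : -1 ≤ c := (abs_le.mp hxabs).1
  have hcomm : ⟪v', v⟫ = c := by rw [hc]; exact real_inner_comm v v'
  -- the antipodal case
  rcases eq_or_lt_of_le hcm1 with hm1 | hm1
  · -- c = -1 : v' = -v
    have hone : ⟪v, -v'⟫ = 1 := by rw [inner_neg_right, ← hc, ← hm1]; ring
    have hvv : v = -v' := (inner_eq_one_iff_of_norm_eq_one hv (by rwa [norm_neg])).mp hone
    have hv'v : v' = -v := by rw [hvv]; simp
    exact no_all_ortho hcap hN hρ hNW hv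
      (fun Y hY => le_trans h1 (mnf_le hsub hY))
      (fun Y hY => by
        rw [← hv'v]; exact le_trans h2 (mnf_le hsub hY))
  -- main case : -1 < c < 0
  set w := v' - c • v with hw
  have hvw : ⟪v, w⟫ = 0 := by
    rw [hw, inner_sub_right, real_inner_smul_right, real_inner_self_eq_norm_sq, hv]
    rw [← hc]; ring
  have hwsq : ‖w‖^2 = 1 - c^2 := by
    rw [hw, norm_sub_sq_real, real_inner_smul_right, hcomm, norm_smul, hv']
    rw [Real.norm_eq_abs, mul_pow, sq_abs, hv]
    ring
  have hc2 : c^2 < 1 := by nlinarith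
  have hwne : w ≠ 0 := by
    intro h
    rw [h, norm_zero] at hwsq
    nlinarith
  have hwpos : 0 < ‖w‖ := norm_pos_iff.mpr hwne
  set e₂ := nmz w with he₂
  have he₂n : ‖e₂‖ = 1 := nmz_norm hwne
  have hve₂ : ⟪v, e₂⟫ = 0 := by rw [he₂, inner_nmz, hvw, mul_zero]
  set θ := Real.arccos c with hθ
  have hθ2 : π/2 < θ := by
    rcases lt_or_ge (π/2) θ with h | h
    · exact h
    · exact absurd (Real.arccos_le_pi_div_two.mp h) (not_le.mpr hcon)
  have hθπ : θ < π := by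
    refine lt_of_le_of_ne (Real.arccos_le_pi c) (fun h => ?_)
    have := Real.arccos_eq_pi.mp h
    linarith
  have hθpos : 0 < θ := by linarith [Real.pi_pos]
  have hsinθ : Real.sin θ = Real.sqrt (1 - c^2) := Real.sin_arccos c
  have hsinθpos : 0 < Real.sin θ := Real.sin_pos_of_pos_of_lt_pi hθpos hθπ
  have hc1 : c ≤ 1 := (abs_le.mp hxabs).2
  have hcosθ : Real.cos θ = c := Real.cos_arccos hcm1 hc1
  have hwnorm : ‖w‖ = Real.sin θ := by
    rw [hsinθ, ← hwsq, Real.sqrt_sq (norm_nonneg w)]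
  set γ : ℝ → E n := fun t => Real.cos t • v + Real.sin t • e₂ with hγ
  have hvv : ⟪v, v⟫ = 1 := by rw [real_inner_self_eq_norm_sq, hv]; norm_num
  have hee : ⟪e₂, e₂⟫ = 1 := by rw [real_inner_self_eq_norm_sq, he₂n]; norm_num
  have hev : ⟪e₂, v⟫ = 0 := (real_inner_comm v e₂).trans hve₂
  have hγinner : ∀ a b, ⟪γ a, γ b⟫ = Real.cos (a - b) := by
    intro a b
    simp only [hγ, inner_add_left, inner_add_right, real_inner_smul_left,
      real_inner_smul_right, hvv, hee, hev, hve₂]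
    rw [Real.cos_sub]; ring
  have hγnorm : ∀ t, ‖γ t‖ = 1 := by
    intro t
    have h := hγinner t t
    rw [sub_self, Real.cos_zero, real_inner_self_eq_norm_sq] at h
    have h2' : (‖γ t‖ - 1) * (‖γ t‖ + 1) = 0 := by nlinarith
    rcases mul_eq_zero.mp h2' with h3 | h3
    · linarith
    · linarith [norm_nonneg (γ t)]
  have hγ0 : γ 0 = v := by simp [hγ]
  have hγθ : γ θ = v' := by
    have hs : Real.sin θ • e₂ = w := by
      rw [he₂]
      unfold nmz
      rw [smul_smul, ← hwnorm, mul_inv_cancel₀ (by positivity), one_smul]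
    simp only [hγ, hcosθ, hs, hw]
    abel
  have hγπ : ∀ t, γ (t + π) = - γ t := by
    intro t
    simp only [hγ, Real.cos_add_pi, Real.sin_add_pi, neg_smul, neg_add]
  set g : ℝ → ℝ := fun t => mnf W (γ t) with hg
  have hγcont : Continuous γ :=
    (Real.continuous_cos.smul continuous_const).add (Real.continuous_sin.smul continuous_const)
  have gcont : Continuous g := (mnf_continuous hsub hne).comp hγcont
  have hgθ : g θ = mnf W v' := by rw [hg]; simp only; rw [hγθ]
  have hg0 : g 0 = mnf W v := by rw [hg]; simp only; rw [hγ0]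
  -- nonnegativity on [0, θ]
  have hstep : ∀ t ∈ Set.Icc (0:ℝ) θ, 0 ≤ g t := by
    rintro t ⟨ht0, htθ⟩
    apply le_mnf hne
    intro Y hY
    set α := Real.sin (θ - t) / Real.sin θ with hα
    set β := Real.sin t / Real.sin θ with hβ
    have hαnn : 0 ≤ α := by
      apply div_nonneg _ hsinθpos.le
      exact Real.sin_nonneg_of_nonneg_of_le_pi (by linarith) (by linarith)
    have hβnn : 0 ≤ β := by
      apply div_nonneg _ hsinθpos.le
      exact Real.sin_nonneg_of_nonneg_of_le_pi ht0 (by linarith)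
    have hid : γ t = α • v + β • v' := by
      rw [← hγθ]
      simp only [hγ, smul_add, smul_smul]
      have h1' : β * Real.sin θ = Real.sin t := div_mul_cancel₀ _ hsinθpos.ne'
      have h2' : α + β * Real.cos θ = Real.cos t := by
        rw [hα, hβ, Real.sin_sub]
        field_simp
        ring
      rw [h1']
      have : α • v + (β * Real.cos θ) • v = (α + β * Real.cos θ) • v := by
        rw [add_smul]
      rw [← add_assoc, this, h2']
    rw [hid, inner_add_left, real_inner_smul_left, real_inner_smul_left]
    have l1 : 0 ≤ ⟪v, Y⟫ := le_trans h1 (mnf_le hsub hY)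
    have l2 : 0 ≤ ⟪v', Y⟫ := le_trans h2 (mnf_le hsub hY)
    positivity
  -- the set B and its infimum b
  set B : Set ℝ := Set.Icc θ (θ+π) ∩ {t | g t ≤ 0} with hBdef
  have hBclosed : IsClosed B := isClosed_Icc.inter (isClosed_le gcont continuous_const)
  have hBcomp : IsCompact B := isCompact_Icc.of_isClosed_subset hBclosed Set.inter_subset_left
  have hBne : B.Nonempty := by
    rcases le_or_gt (g (θ+π)) 0 with h | h
    · exact ⟨θ+π, ⟨le_add_of_nonneg_right Real.pi_pos.le, le_refl _⟩, h⟩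
    · exfalso
      have hγv' : γ (θ+π) = -v' := by rw [hγπ θ, hγθ]
      refine no_all_ortho hcap hN hρ hNW hv'
        (fun Y hY => le_trans h2 (mnf_le hsub hY))
        (fun Y hY => ?_)
      rw [← hγv']
      exact le_trans h.le (mnf_le hsub hY)
  set b := sInf B with hb
  have hbB : b ∈ B := hBcomp.sInf_mem hBne
  have hbIcc : b ∈ Set.Icc θ (θ+π) := hbB.1
  have hgb : g b ≤ 0 := hbB.2
  have hgb0 : g b = 0 := by
    refine le_antisymm hgb ?_
    by_contra hneg
    push_neg at hneg
    have hbθ : θ < b := by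
      rcases eq_or_lt_of_le hbIcc.1 with heq | hlt
      · exfalso; rw [← heq, hgθ] at hneg; linarith
      · exact hlt
    obtain ⟨ε, hε, hball⟩ := Metric.isOpen_iff.mp
      (isOpen_lt gcont continuous_const) b hneg
    set τ := max θ (b - ε/2) with hτ
    have hτb : τ < b := max_lt hbθ (by linarith)
    have hτball : τ ∈ Metric.ball b ε := by
      rw [Metric.mem_ball, Real.dist_eq, abs_of_nonpos (by linarith)]
      have : b - ε/2 ≤ τ := le_max_right _ _
      linarith
    have hτB : τ ∈ B := by
      have hgτ : g τ < 0 := hball hτball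
      exact ⟨⟨le_max_left _ _, by linarith [hbIcc.2]⟩, hgτ.le⟩
    exact absurd (csInf_le hBcomp.bddBelow hτB) (not_le.mpr hτb)
  -- the set A and its supremum a
  set A : Set ℝ := Set.Icc (-π) 0 ∩ {t | g t ≤ 0} with hAdef
  have hAclosed : IsClosed A := isClosed_Icc.inter (isClosed_le gcont continuous_const)
  have hAcomp : IsCompact A := isCompact_Icc.of_isClosed_subset hAclosed Set.inter_subset_left
  have hγmπ : γ (-π) = -v := by
    have h := hγπ (-π)
    rw [neg_add_cancel, hγ0] at h
    rw [← neg_neg (γ (-π)), ← h]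
  have hAne : A.Nonempty := by
    rcases le_or_gt (g (-π)) 0 with h | h
    · exact ⟨-π, ⟨le_refl _, by linarith [Real.pi_pos]⟩, h⟩
    · exfalso
      refine no_all_ortho hcap hN hρ hNW hv
        (fun Y hY => le_trans h1 (mnf_le hsub hY))
        (fun Y hY => ?_)
      rw [← hγmπ]
      exact le_trans h.le (mnf_le hsub hY)
  set a := sSup A with ha
  have haA : a ∈ A := hAcomp.sSup_mem hAne
  have haIcc : a ∈ Set.Icc (-π) 0 := haA.1
  have hga : g a ≤ 0 := haA.2
  have hga0 : g a = 0 := by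
    refine le_antisymm hga ?_
    by_contra hneg
    push_neg at hneg
    have ha0 : a < 0 := by
      rcases eq_or_lt_of_le haIcc.2 with heq | hlt
      · exfalso; rw [heq, hg0] at hneg; linarith
      · exact hlt
    obtain ⟨ε, hε, hball⟩ := Metric.isOpen_iff.mp
      (isOpen_lt gcont continuous_const) a hneg
    set τ := min 0 (a + ε/2) with hτ
    have haτ : a < τ := lt_min ha0 (by linarith)
    have hτball : τ ∈ Metric.ball a ε := by
      rw [Metric.mem_ball, Real.dist_eq, abs_of_nonneg (by linarith)]
      have : τ ≤ a + ε/2 := min_le_right _ _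
      linarith
    have hτA : τ ∈ A := by
      have hgτ : g τ < 0 := hball hτball
      exact ⟨⟨by linarith [haIcc.1], min_le_left _ _⟩, hgτ.le⟩
    exact absurd (le_csSup hAcomp.bddAbove hτA) (not_le.mpr haτ)
  -- both endpoints are supporting centers
  have hCa : Supports W (γ a) := supports_of_mnf_zero hcl hsub hWc hne (hγnorm a) hga0
  have hCb : Supports W (γ b) := supports_of_mnf_zero hcl hsub hWc hne (hγnorm b) hgb0
  have hpair : 0 ≤ ⟪γ a, γ b⟫ := width_pair hcw hCa hCb
  rw [hγinner a b] at hpair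
  have hcoseq : Real.cos (a - b) = Real.cos (b - a) := by
    rw [← Real.cos_neg, neg_sub]
  rw [hcoseq] at hpair
  -- b - a < π
  have hba : b - a < π := by
    by_contra hge
    push_neg at hge
    set t₀ := b - π with ht₀
    have ht₀a : a ≤ t₀ := by linarith
    have ht₀θ : t₀ ≤ θ := by linarith [hbIcc.2]
    have hg₀ : 0 ≤ g t₀ := by
      rcases le_or_gt t₀ 0 with hle | hlt
      · rcases eq_or_lt_of_le ht₀a with heq | hlt'
        · rw [← heq, hga0]
        · by_contra hneg
          push_neg at hneg
          have ht₀A : t₀ ∈ A := ⟨⟨by linarith [hθpos, hbIcc.1], hle⟩, hneg.le⟩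
          exact absurd (le_csSup hAcomp.bddAbove ht₀A) (not_le.mpr hlt')
      · exact hstep t₀ ⟨hlt.le, ht₀θ⟩
    have hγb : γ b = - γ t₀ := by
      rw [← hγπ t₀, ht₀]
      ring_nf
    refine no_all_ortho hcap hN hρ hNW (hγnorm t₀)
      (fun Y hY => le_trans hg₀ (mnf_le hsub hY))
      (fun Y hY => ?_)
    rw [← hγb]
    exact le_trans hgb0.ge (mnf_le hsub hY)
  have hba2 : π/2 < b - a := by linarith [hbIcc.1, haIcc.2]
  have := Real.cos_neg_of_pi_div_two_lt_of_lt hba2 (by linarith [Real.pi_pos])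
  linarith

end CW

namespace CW

variable {n : ℕ} {W : Set (E n)}

lemma nmz_inner_left (x u : E n) : ⟪nmz x, u⟫ = ‖x‖⁻¹ * ⟪x, u⟫ :=
  real_inner_smul_left _ _ _

set_option maxHeartbeats 2000000 in
lemma key (hcl : IsClosed W) (hsub : ∀ Y ∈ W, ‖Y‖ = 1) (hWc : IsCompact W)
    (hne : W.Nonempty) {N : E n} {ρ : ℝ}
    (hcap : ∀ Y : E n, ‖Y‖ = 1 → dist Y N < ρ → Y ∈ W) (hN : ‖N‖ = 1) (hρ : 0 < ρ)
    (hNW : N ∈ W) {Z : E n} (hZn : ‖Z‖ = 1) (hZ : ∀ Y ∈ W, ⟪Z, Y⟫ < 0)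
    (hcw : ConstWidth W (π/2)) :
    ∀ P ∈ W, ∀ X ∈ W, 0 ≤ ⟪P, X⟫ := by
  intro P hP X hX
  by_contra hcon
  push_neg at hcon
  have hPn : ‖P‖ = 1 := hsub P hP
  have hZn' : ‖-Z‖ = 1 := by rwa [norm_neg]
  obtain ⟨Y₀, hY₀, hY₀m⟩ := mnf_attained hWc hne (-Z)
  set m := mnf W (-Z) with hmdef
  have hm : 0 < m := by
    rw [← hY₀m, inner_neg_left]; linarith [hZ Y₀ hY₀]
  set q : ℝ := ⟪-Z, P⟫ with hqdef
  have hq : 0 < q := by rw [hqdef, inner_neg_left]; linarith [hZ P hP]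
  set s₀ : ℝ := min (ρ/5) (1/2) with hs₀def
  have hs₀ : 0 < s₀ := lt_min (by linarith) (by norm_num)
  set δ : ℝ := min (min (m/2) (q/2)) (1/2) with hδdef
  have hδ0 : 0 < δ := lt_min (lt_min (by linarith) (by linarith)) (by norm_num)
  have hδm : δ ≤ m/2 := le_trans (min_le_left _ _) (min_le_left _ _)
  have hδq : δ ≤ q/2 := le_trans (min_le_left _ _) (min_le_right _ _)
  have hδ2 : δ ≤ 1/2 := min_le_right _ _
  set Av := -Z + δ • N with hAvdef
  have hδN : ‖δ • N‖ = δ := by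
    rw [norm_smul, hN, Real.norm_eq_abs, abs_of_pos hδ0, mul_one]
  have hAvlow : 1 - δ ≤ ‖Av‖ := by
    have h := norm_sub_norm_le (-Z) (-(δ • N))
    rw [sub_neg_eq_add] at h
    simp only [norm_neg] at h
    rw [hZn, hδN] at h
    linarith
  have hAvhigh : ‖Av‖ ≤ 1 + δ := by
    calc ‖Av‖ ≤ ‖-Z‖ + ‖δ • N‖ := norm_add_le _ _
    _ = 1 + δ := by rw [hZn', hδN]
  have hAvpos : 0 < ‖Av‖ := by linarith
  have hAvne : Av ≠ 0 := by
    intro h; rw [h, norm_zero] at hAvpos; exact lt_irrefl _ hAvpos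
  set A := nmz Av with hAdef
  have hAn : ‖A‖ = 1 := nmz_norm hAvne
  have hAin : ∀ u : E n, ⟪A, u⟫ = ‖Av‖⁻¹ * (⟪-Z, u⟫ + δ * ⟪N, u⟫) := by
    intro u
    rw [hAdef, nmz_inner_left, hAvdef, inner_add_left, real_inner_smul_left]
  have hrinv : 0 < ‖Av‖⁻¹ := by positivity
  have hrinv2 : (1:ℝ)/2 ≤ ‖Av‖⁻¹ := by
    rw [le_inv_comm₀ (by norm_num) hAvpos]
    calc ‖Av‖ ≤ 1 + δ := hAvhigh
    _ ≤ (1/2)⁻¹ := by norm_num; linarith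
  -- A is strictly inside the dual cone
  have hmA : 0 < mnf W A := by
    have hlow : ‖Av‖⁻¹ * (m - δ) ≤ mnf W A := by
      apply le_mnf hne
      intro Y hY
      rw [hAin Y]
      have l1 : m ≤ ⟪-Z, Y⟫ := mnf_le hsub hY
      have l2 : -1 ≤ ⟪N, Y⟫ := by
        have := abs_real_inner_le_norm N Y
        rw [hN, hsub Y hY, mul_one] at this
        linarith [(abs_le.mp this).1]
      have : m - δ ≤ ⟪-Z, Y⟫ + δ * ⟪N, Y⟫ := by nlinarith
      nlinarith
    have : 0 < ‖Av‖⁻¹ * (m - δ) := by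
      apply mul_pos hrinv; linarith
    linarith
  -- A and P are not antipodal
  have hAP : 0 < ⟪A, P⟫ := by
    rw [hAin P]
    have l2 : -1 ≤ ⟪N, P⟫ := by
      have := abs_real_inner_le_norm N P
      rw [hN, hPn, mul_one] at this
      linarith [(abs_le.mp this).1]
    have : 0 < q + δ * ⟪N, P⟫ := by nlinarith
    positivity
  -- uniform lower bound against all supporting centers
  have hAsupp : ∀ C', Supports W C' → δ * s₀ / 2 ≤ ⟪A, C'⟫ := by
    intro C' hC'
    have hC'n : ‖C'‖ = 1 := hC'.1
    have hC'dual : 0 ≤ mnf W C' := le_mnf hne (fun Y hY => (hC'.2.1 hY).2)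
    have hZC' : 0 ≤ ⟪-Z, C'⟫ :=
      vp hcl hsub hWc hne hcap hN hρ hNW hcw hZn' hC'n hm.le hC'dual
    have hNC' : s₀ ≤ ⟪N, C'⟫ := by
      have := cap_inner_ge hcap hN hρ hC'n (fun Y hY => (hC'.2.1 hY).2)
      rwa [real_inner_comm] at this
    rw [hAin C']
    have h1' : δ * s₀ ≤ ⟪-Z, C'⟫ + δ * ⟪N, C'⟫ := by nlinarith
    calc δ * s₀ / 2 = (1/2) * (δ * s₀) := by ring
    _ ≤ ‖Av‖⁻¹ * (⟪-Z, C'⟫ + δ * ⟪N, C'⟫) :=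
        mul_le_mul hrinv2 h1' (by positivity) hrinv.le
  -- walk from A to P
  set v : ℝ → E n := fun t => (1-t) • A + t • P with hvdef
  have hvsq : ∀ t ∈ Set.Icc (0:ℝ) 1, (1:ℝ)/2 ≤ ‖v t‖^2 := by
    rintro t ⟨ht0, ht1⟩
    have hexp : ‖v t‖^2 = (1-t)^2 + 2*((1-t)*t*⟪A,P⟫) + t^2 := by
      rw [hvdef]
      simp only
      rw [norm_add_sq_real, real_inner_smul_left, real_inner_smul_right, norm_smul,
        norm_smul, hAn, hPn, Real.norm_eq_abs, Real.norm_eq_abs,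
        abs_of_nonneg (by linarith : (0:ℝ) ≤ 1 - t), abs_of_nonneg ht0]
      ring
    rw [hexp]
    nlinarith [mul_nonneg (mul_nonneg (by linarith : (0:ℝ) ≤ 1-t) ht0) hAP.le, sq_nonneg (2*t - 1)]
  have hvne : ∀ t ∈ Set.Icc (0:ℝ) 1, v t ≠ 0 := by
    intro t ht h0
    have := hvsq t ht
    rw [h0, norm_zero] at this
    norm_num at this
  have hvnorm : ∀ t ∈ Set.Icc (0:ℝ) 1, 0 < ‖v t‖ := fun t ht =>
    norm_pos_iff.mpr (hvne t ht)
  set γ2 : ℝ → E n := fun t => nmz (v t) with hγ2def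
  have hvcont : Continuous v := by
    apply Continuous.add
    · exact (continuous_const.sub continuous_id).smul continuous_const
    · exact continuous_id.smul continuous_const
  have hγ2cont : ContinuousOn γ2 (Set.Icc 0 1) := by
    intro t ht
    apply ContinuousAt.continuousWithinAt
    have h1' : ContinuousAt (fun t => ‖v t‖⁻¹) t :=
      (hvcont.norm.continuousAt).inv₀ (hvnorm t ht).ne'
    exact h1'.smul hvcont.continuousAt
  set h : ℝ → ℝ := fun t => mnf W (γ2 t) with hhdef
  have hhcont : ContinuousOn h (Set.Icc 0 1) :=
    (mnf_continuous hsub hne).comp_continuousOn hγ2cont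
  have hγ20 : γ2 0 = A := by
    rw [hγ2def]; simp only [hvdef]
    norm_num
    exact nmz_unit hAn
  have hγ21 : γ2 1 = P := by
    rw [hγ2def]; simp only [hvdef]
    norm_num
    exact nmz_unit hPn
  have hh0 : 0 < h 0 := by rw [hhdef]; simp only; rw [hγ20]; exact hmA
  have hh1 : h 1 < 0 := by
    rw [hhdef]; simp only; rw [hγ21]
    calc mnf W P ≤ ⟪P, X⟫ := mnf_le hsub hX
    _ < 0 := hcon
  have hIVT := intermediate_value_Icc' (zero_le_one) hhcont
  have h0mem : (0:ℝ) ∈ Set.Icc (h 1) (h 0) := ⟨hh1.le, hh0.le⟩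
  obtain ⟨t, htIcc, ht0⟩ := hIVT h0mem
  have hCn : ‖γ2 t‖ = 1 := nmz_norm (hvne t htIcc)
  have hCs : Supports W (γ2 t) := supports_of_mnf_zero hcl hsub hWc hne hCn ht0
  -- derive the contradiction
  have ht00 := htIcc.1
  have ht11 := htIcc.2
  have hLle : ∀ κ, 0 < κ → ‖v t‖⁻¹ * ((1-t) * (δ * s₀ / 2)) < κ := by
    intro κ hκ
    obtain ⟨C', hC', hfar⟩ := width_exists_far hcw hCs hCn hκ
    have hAC' := hAsupp C' hC'
    have hPC' : 0 ≤ ⟪P, C'⟫ := by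
      have := (hC'.2.1 hP).2
      rwa [real_inner_comm] at this
    have hexp : ⟪γ2 t, C'⟫ = ‖v t‖⁻¹ * ((1-t) * ⟪A, C'⟫ + t * ⟪P, C'⟫) := by
      rw [hγ2def]; simp only
      rw [nmz_inner_left, hvdef]; simp only
      rw [inner_add_left, real_inner_smul_left, real_inner_smul_left]
    have hrpos : 0 < ‖v t‖⁻¹ := by
      have := hvnorm t htIcc; positivity
    have hlb : ‖v t‖⁻¹ * ((1-t) * (δ * s₀ / 2)) ≤ ⟪γ2 t, C'⟫ := by
      rw [hexp]
      have e1 : (1-t) * (δ * s₀ / 2) ≤ (1-t) * ⟪A, C'⟫ :=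
        mul_le_mul_of_nonneg_left hAC' (by linarith)
      have e2 : 0 ≤ t * ⟪P, C'⟫ := mul_nonneg ht00 hPC'
      have : (1-t) * (δ * s₀ / 2) ≤ (1-t) * ⟪A, C'⟫ + t * ⟪P, C'⟫ := by linarith
      exact mul_le_mul_of_nonneg_left this hrpos.le
    linarith
  have hL0 : ‖v t‖⁻¹ * ((1-t) * (δ * s₀ / 2)) ≤ 0 := by
    by_contra hpos
    push_neg at hpos
    exact absurd (hLle _ hpos) (lt_irrefl _)
  have hrpos : 0 < ‖v t‖⁻¹ := by
    have := hvnorm t htIcc; positivity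
  have h1t : 1 - t ≤ 0 := by
    by_contra hgt
    push_neg at hgt
    have hc : 0 < δ * s₀ / 2 := by positivity
    have : 0 < ‖v t‖⁻¹ * ((1-t) * (δ * s₀ / 2)) := mul_pos hrpos (mul_pos hgt hc)
    linarith
  have ht1 : t = 1 := le_antisymm ht11 (by linarith)
  rw [ht1] at ht0
  have : h 1 = 0 := ht0
  linarith

end CW


theorem constant_width_diam_le_and_subset_polar {n : ℕ} (W : Set (E n))
    (hW : SphConvexBody W) (hcw : ConstWidth W (π / 2)) :
    diam W ≤ π / 2 ∧ W ⊆ polar W := by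
  obtain ⟨hcl, ⟨Z, hZs, hZe⟩, hconv, ⟨N, hNint⟩⟩ := hW
  have hZn : ‖Z‖ = 1 := hZs
  have hsubS : W ⊆ sph n := hconv.1
  have hsub : ∀ Y ∈ W, ‖Y‖ = 1 := fun Y hY => hsubS hY
  have hNW : N ∈ W := hNint.1
  obtain ⟨U, hUopen, hNU, hUsub⟩ := hNint.2
  obtain ⟨ρ, hρ, hball⟩ := Metric.isOpen_iff.mp hUopen N hNU
  have hcap : ∀ Y : E n, ‖Y‖ = 1 → dist Y N < ρ → Y ∈ W := fun Y h1 h2 =>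
    hUsub ⟨hball h2, h1⟩
  have hN : ‖N‖ = 1 := hsub N hNW
  have hne : W.Nonempty := ⟨N, hNW⟩
  have hWc : IsCompact W := by
    apply Metric.isCompact_of_isClosed_isBounded hcl
    apply (Metric.isBounded_closedBall (x := (0 : E n)) (r := 1)).subset
    intro Y hY
    rw [Metric.mem_closedBall, dist_zero_right, hsub Y hY]
  have hZ : ∀ Y ∈ W, ⟪Z, Y⟫ < 0 := by
    intro Y hY
    by_contra hge
    push_neg at hge
    have hmem : Y ∈ W ∩ hemi Z := ⟨hY, hsub Y hY, hge⟩
    rw [hZe] at hmem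
    exact hmem
  have hkey := CW.key hcl hsub hWc hne hcap hN hρ hNW hZn hZ hcw
  constructor
  · apply Real.sSup_le
    · rintro d ⟨P, hP, Q, hQ, rfl⟩
      exact Real.arccos_le_pi_div_two.mpr (hkey P hP Q hQ)
    · linarith [Real.pi_pos]
  · intro X hX
    exact ⟨hsub X hX, fun P hP => hkey P hP X hX⟩
end

section
/- Let W be a spherical convex body in S^{n+1} with W = W°. Then every supporting hemisphere H(P) of W satisfies width_{H(P)}(W) ≤ π/2; equivalently, diam(W) ≤ π/2 implies no supporting width exceeds π/2. -/
open scoped RealInnerProductSpace BigOperators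
open Real

open Sph

section Aux

variable {n : ℕ}

private lemma norm_comb {X P : E n} (hX : ‖X‖ = 1) (hP : ‖P‖ = 1)
    (hXP : ⟪X, P⟫ = 0) (a b : ℝ) (hab : a ^ 2 + b ^ 2 = 1) :
    ‖a • X + b • P‖ = 1 := by
  have h1 : ⟪a • X + b • P, a • X + b • P⟫ = 1 := by
    have hPX : ⟪P, X⟫ = 0 := by rw [real_inner_comm]; exact hXP
    have hXX : ⟪X, X⟫ = 1 := by
      rw [real_inner_self_eq_norm_sq, hX]; norm_num
    have hPP : ⟪P, P⟫ = 1 := by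
      rw [real_inner_self_eq_norm_sq, hP]; norm_num
    rw [inner_add_left, inner_add_right, inner_add_right, real_inner_smul_left,
      real_inner_smul_left, real_inner_smul_left, real_inner_smul_left,
      real_inner_smul_right, real_inner_smul_right, real_inner_smul_right,
      real_inner_smul_right, hXX, hPP, hXP, hPX]
    ring_nf
    nlinarith [hab]
  have h2 : ‖a • X + b • P‖ ^ 2 = 1 := by
    rw [← real_inner_self_eq_norm_sq]; exact h1
  have h3 : 0 ≤ ‖a • X + b • P‖ := norm_nonneg _
  have h4 : (‖a • X + b • P‖ - 1) * (‖a • X + b • P‖ + 1) = 0 := by nlinarith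
  rcases mul_eq_zero.1 h4 with h | h
  · linarith
  · linarith

/-- The key existence lemma: given a supporting hemisphere `H(P)` touching `W`
at `X`, and `W ⊆ H(X)`, there is a supporting hemisphere `H(Q)` with
`⟪P, Q⟫ ≤ 0`. -/
private lemma exists_opposite_support {W : Set (E n)} (hclosed : IsClosed W)
    (hsub : W ⊆ sph n) {P X : E n} (hPn : ‖P‖ = 1) (hXW : X ∈ W)
    (hPX : ⟪P, X⟫ = 0) (hXall : ∀ w ∈ W, 0 ≤ ⟪X, w⟫) :
    ∃ Q, Supports W Q ∧ ⟪P, Q⟫ ≤ 0 := by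
  have hXn : ‖X‖ = 1 := hsub hXW
  have hXP : ⟪X, P⟫ = 0 := by rw [real_inner_comm]; exact hPX
  -- compactness of W
  have hWball : W ⊆ Metric.closedBall 0 1 := by
    intro w hw
    simp only [Metric.mem_closedBall, dist_zero_right]
    exact le_of_eq (hsub hw)
  have hWc : IsCompact W :=
    (isCompact_closedBall (0 : E n) 1).of_isClosed_subset hclosed hWball
  have hWne : W.Nonempty := ⟨X, hXW⟩
  -- the 1-Lipschitz "support slack" function
  set g : E n → ℝ := fun v => sInf ((fun w => ⟪v, w⟫) '' W) with hg
  have himne : ∀ v : E n, ((fun w => ⟪v, w⟫) '' W).Nonempty :=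
    fun v => hWne.image _
  have hbdd : ∀ v : E n, BddBelow ((fun w => ⟪v, w⟫) '' W) := by
    intro v
    refine ⟨-‖v‖, ?_⟩
    rintro x ⟨w, hw, rfl⟩
    have h1 : |⟪v, w⟫| ≤ ‖v‖ * ‖w‖ := abs_real_inner_le_norm v w
    rw [hsub hw, mul_one] at h1
    have := abs_le.1 h1
    linarith [this.1]
  have hg_le : ∀ v : E n, ∀ w ∈ W, g v ≤ ⟪v, w⟫ := by
    intro v w hw
    exact csInf_le (hbdd v) ⟨w, hw, rfl⟩
  have hg_ge : ∀ v : E n, ∀ c : ℝ, (∀ w ∈ W, c ≤ ⟪v, w⟫) → c ≤ g v := by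
    intro v c hc
    refine le_csInf (himne v) ?_
    rintro x ⟨w, hw, rfl⟩
    exact hc w hw
  have hglip : LipschitzWith 1 g := by
    refine LipschitzWith.of_dist_le_mul ?_
    intro x y
    simp only [NNReal.coe_one, one_mul, Real.dist_eq, dist_eq_norm]
    have key : ∀ u v : E n, g u - ‖u - v‖ ≤ g v := by
      intro u v
      refine hg_ge v _ ?_
      intro w hw
      have h1 : g u ≤ ⟪u, w⟫ := hg_le u w hw
      have h2 : ⟪u, w⟫ - ⟪v, w⟫ = ⟪u - v, w⟫ := by rw [inner_sub_left]
      have h3 : ⟪u - v, w⟫ ≤ ‖u - v‖ * ‖w‖ := real_inner_le_norm _ _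
      rw [hsub hw, mul_one] at h3
      linarith
    have k1 := key x y
    have k2 := key y x
    rw [norm_sub_rev y x] at k2
    rw [Real.norm_eq_abs, abs_le]
    constructor <;> linarith
  -- the rotating hemisphere centers
  set Q : ℝ → E n := fun t => Real.cos t • X + (-Real.sin t) • P with hQdef
  have hQnorm : ∀ t, ‖Q t‖ = 1 := by
    intro t
    refine norm_comb hXn hPn hXP _ _ ?_
    have := Real.sin_sq_add_cos_sq t
    ring_nf
    ring_nf at this
    nlinarith [this]
  have hQcont : Continuous Q := by
    apply Continuous.add
    · exact Real.continuous_cos.smul continuous_const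
    · exact (Real.continuous_sin.neg).smul continuous_const
  set f : ℝ → ℝ := fun t => g (Q t) with hf
  have hfcont : Continuous f := hglip.continuous.comp hQcont
  -- endpoint values
  have hQ0 : Q 0 = X := by simp [hQdef]
  have hf0 : 0 ≤ f 0 := by
    rw [hf]
    simp only [hQ0]
    exact hg_ge X 0 hXall
  have hQpi2 : Q (π / 2) = -P := by
    simp [hQdef, Real.cos_pi_div_two, Real.sin_pi_div_two]
  have hfpi2 : f (π / 2) ≤ 0 := by
    rw [hf]
    simp only [hQpi2]
    have : g (-P) ≤ ⟪-P, X⟫ := hg_le (-P) X hXW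
    rw [inner_neg_left, hPX, neg_zero] at this
    exact this
  -- intermediate value theorem
  have hivt : (0 : ℝ) ∈ f '' Set.Icc 0 (π / 2) := by
    have h2 : (0 : ℝ) ≤ π / 2 := by positivity
    have := intermediate_value_Icc' h2 hfcont.continuousOn
    exact this ⟨hfpi2, hf0⟩
  obtain ⟨t, ht, hft⟩ := hivt
  -- properties of Q t
  have hWQ : ∀ w ∈ W, 0 ≤ ⟪Q t, w⟫ := by
    intro w hw
    have := hg_le (Q t) w hw
    rw [show g (Q t) = f t from rfl, hft] at this
    exact this
  have hPQt : ⟪P, Q t⟫ = -Real.sin t := by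
    rw [hQdef]
    simp only
    rw [inner_add_right, real_inner_smul_right, real_inner_smul_right, hPX,
      real_inner_self_eq_norm_sq, hPn]
    ring
  have hsint : 0 ≤ Real.sin t := by
    refine Real.sin_nonneg_of_nonneg_of_le_pi ht.1 ?_
    have := ht.2
    linarith [Real.pi_pos]
  -- the minimum is attained
  obtain ⟨w₀, hw₀W, hw₀min⟩ := hWc.exists_isMinOn hWne
    (Continuous.continuousOn (show Continuous fun w : E n => ⟪Q t, w⟫ from
      continuous_const.inner continuous_id))
  have hw₀le : ∀ w ∈ W, ⟪Q t, w₀⟫ ≤ ⟪Q t, w⟫ := fun w hw => by simpa using hw₀min hw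
  have hw₀0 : ⟪Q t, w₀⟫ = 0 := by
    have h1 : 0 ≤ ⟪Q t, w₀⟫ := hWQ w₀ hw₀W
    have h2 : g (Q t) ≥ ⟪Q t, w₀⟫ := hg_ge (Q t) _ hw₀le
    rw [show g (Q t) = f t from rfl, hft] at h2
    linarith
  have hw₀n : ‖w₀‖ = 1 := hsub hw₀W
  have hw₀Q : ⟪w₀, Q t⟫ = 0 := by rw [real_inner_comm]; exact hw₀0
  -- w₀ is a frontier point
  have hfront : w₀ ∈ sphFrontier W := by
    constructor
    · exact subset_closure hw₀W
    · -- approximate by points outside W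
      set Y : ℕ → E n := fun k =>
        Real.cos (1 / (k + 1)) • w₀ + (-Real.sin (1 / (k + 1))) • Q t with hY
      have hYsph : ∀ k, Y k ∈ sph n := by
        intro k
        show ‖Y k‖ = 1
        refine norm_comb hw₀n (hQnorm t) hw₀Q _ _ ?_
        have := Real.sin_sq_add_cos_sq (1 / ((k : ℝ) + 1))
        nlinarith [this]
      have hYnotW : ∀ k, Y k ∉ W := by
        intro k hk
        have h1 : 0 ≤ ⟪Q t, Y k⟫ := hWQ _ hk
        have h2 : ⟪Q t, Y k⟫ = -Real.sin (1 / (k + 1)) := by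
          rw [hY]
          simp only
          rw [inner_add_right, real_inner_smul_right, real_inner_smul_right,
            hw₀0, real_inner_self_eq_norm_sq, hQnorm t]
          ring
        have hpos : 0 < Real.sin (1 / ((k : ℝ) + 1)) := by
          apply Real.sin_pos_of_pos_of_lt_pi
          · positivity
          · have h3 : 1 / ((k : ℝ) + 1) ≤ 1 := by
              rw [div_le_one (by positivity)]
              linarith [Nat.cast_nonneg (α := ℝ) k]
            linarith [Real.pi_gt_three]
        rw [h2] at h1
        linarith
      have hYtend : Filter.Tendsto Y Filter.atTop (nhds w₀) := by
        have hc : Continuous fun s : ℝ => Real.cos s • w₀ + (-Real.sin s) • Q t := by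
          apply Continuous.add
          · exact Real.continuous_cos.smul continuous_const
          · exact (Real.continuous_sin.neg).smul continuous_const
        have h0 : (fun s : ℝ => Real.cos s • w₀ + (-Real.sin s) • Q t) 0 = w₀ := by
          simp
        have htend := (hc.tendsto 0).comp tendsto_one_div_add_atTop_nhds_zero_nat
        simp only [Real.cos_zero, Real.sin_zero, neg_zero, one_smul, zero_smul,
          add_zero] at htend
        exact htend
      refine mem_closure_of_tendsto hYtend ?_
      filter_upwards with k
      exact ⟨hYsph k, hYnotW k⟩
  refine ⟨Q t, ⟨hQnorm t, ?_, ⟨w₀, hfront, hw₀n, hw₀0⟩⟩, ?_⟩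
  · intro w hw
    exact ⟨hsub hw, hWQ w hw⟩
  · rw [hPQt]
    linarith

/-- From a supporting hemisphere at angle `≥ π/2` from `P`, the width at `P`
is at most `π/2`. -/
private lemma widthAt_le_of_opposite {W : Set (E n)} {P Q : E n}
    (hQ : Supports W Q) (hPQ : ⟪P, Q⟫ ≤ 0) : widthAt W P ≤ π / 2 := by
  have hbdd : BddBelow {d | ∃ Q, Supports W Q ∧ d = π - gdist P Q} := by
    refine ⟨0, ?_⟩
    rintro x ⟨R, _, rfl⟩
    have := Real.arccos_le_pi ⟪P, R⟫
    simp only [gdist]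
    linarith
  have hmem : π - gdist P Q ∈ {d | ∃ Q, Supports W Q ∧ d = π - gdist P Q} :=
    ⟨Q, hQ, rfl⟩
  have h1 : widthAt W P ≤ π - gdist P Q := csInf_le hbdd hmem
  have h2 : π / 2 ≤ gdist P Q := by
    simp only [gdist]
    by_contra h
    push_neg at h
    have := Real.arccos_le_pi_div_two.1 h.le
    -- 0 ≤ ⟪P, Q⟫ and ⟪P, Q⟫ ≤ 0 gives ⟪P,Q⟫ = 0, so arccos = π/2, contradiction
    have heq : ⟪P, Q⟫ = (0 : ℝ) := le_antisymm hPQ this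
    rw [heq, Real.arccos_zero] at h
    exact lt_irrefl _ h
  linarith

end Aux

theorem self_polar_width_le {n : ℕ} (W : Set (E n)) (hW : SphConvexBody W) :
    (W = polar W → ∀ P, Supports W P → widthAt W P ≤ π / 2) ∧
    (diam W ≤ π / 2 → ∀ P, Supports W P → widthAt W P ≤ π / 2) := by
  obtain ⟨hclosed, hhemi, ⟨hsub, hconv⟩, hint⟩ := hW
  constructor
  · intro hpolar P hP
    obtain ⟨hPs, hWP, X, hXfr, hXbd⟩ := hP
    have hPn : ‖P‖ = 1 := hPs
    have hXW : X ∈ W := by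
      rw [← hclosed.closure_eq]; exact hXfr.1
    have hPX : ⟪P, X⟫ = 0 := hXbd.2
    have hXall : ∀ w ∈ W, 0 ≤ ⟪X, w⟫ := by
      intro w hw
      have hXpol : X ∈ polar W := hpolar ▸ hXW
      have := hXpol.2 w hw
      rwa [real_inner_comm] at this
    obtain ⟨Q, hQs, hPQ⟩ := exists_opposite_support hclosed hsub hPn hXW hPX hXall
    exact widthAt_le_of_opposite hQs hPQ
  · intro hdiam P hP
    obtain ⟨hPs, hWP, X, hXfr, hXbd⟩ := hP
    have hPn : ‖P‖ = 1 := hPs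
    have hXW : X ∈ W := by
      rw [← hclosed.closure_eq]; exact hXfr.1
    have hPX : ⟪P, X⟫ = 0 := hXbd.2
    have hXall : ∀ w ∈ W, 0 ≤ ⟪X, w⟫ := by
      intro w hw
      have hbddA : BddAbove {d | ∃ P ∈ W, ∃ Q ∈ W, d = gdist P Q} := by
        refine ⟨π, ?_⟩
        rintro x ⟨A, _, B, _, rfl⟩
        exact Real.arccos_le_pi _
      have hmem : gdist X w ∈ {d | ∃ P ∈ W, ∃ Q ∈ W, d = gdist P Q} :=
        ⟨X, hXW, w, hw, rfl⟩
      have h1 : gdist X w ≤ diam W := le_csSup hbddA hmem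
      have h2 : gdist X w ≤ π / 2 := le_trans h1 hdiam
      exact Real.arccos_le_pi_div_two.1 h2
    obtain ⟨Q, hQs, hPQ⟩ := exists_opposite_support hclosed hsub hPn hXW hPX hXall
    exact widthAt_le_of_opposite hQs hPQ
end

section
/- Maehara's Lemma: For any hemispherical finite subset X = {P₁, …, P_k} of S^{n+1}, the spherical polar of the spherical convex hull of X equals the intersection of the hemispheres centered at the Pᵢ: (s-conv(X))° = ⋂_{i=1}^k H(Pᵢ). -/
open scoped RealInnerProductSpace BigOperators
open Real

open Sph

theorem maehara_lemma {n : ℕ} (X : Set (E n)) (hfin : X.Finite)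
    (hne : X.Nonempty) (hsub : X ⊆ sph n) (hh : Hemispherical X) :
    polar (sconv X) = ⋂ P ∈ X, hemi P := by
  have hXsub : X ⊆ sconv X := by
    intro P hP
    refine ⟨1, fun _ => 1, fun _ => P, fun _ => hP, fun _ => zero_le_one, by simp, ?_⟩
    have h1 : ‖P‖ = 1 := hsub hP
    simp [nmz, h1]
  ext Q
  simp only [polar, Set.mem_setOf_eq, Set.mem_iInter, hemi]
  constructor
  · rintro ⟨hQ, h⟩ P hP
    exact ⟨hQ, h P (hXsub hP)⟩
  · intro h
    obtain ⟨P₀, hP₀⟩ := hne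
    refine ⟨(h P₀ hP₀).1, ?_⟩
    rintro P ⟨k, t, f, hf, ht, hsum, rfl⟩
    have hv : (0:ℝ) ≤ ⟪∑ i, t i • f i, Q⟫ := by
      rw [sum_inner]
      refine Finset.sum_nonneg fun i _ => ?_
      rw [real_inner_smul_left]
      exact mul_nonneg (ht i) (h (f i) (hf i)).2
    rw [nmz, real_inner_smul_left]
    exact mul_nonneg (inv_nonneg.2 (norm_nonneg _)) hv
end

section
/- Let W ⊆ R^{n+1} be a convex body containing the origin in its interior whose induced spherical convex body W̃ = α_N^{-1}(W × {1}) satisfies W̃ = W̃° (i.e., W is a self-dual Wulff shape). If W is centrally symmetric (x ∈ W implies −x ∈ W), then W is the closed unit ball D^{n+1}. -/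
open scoped RealInnerProductSpace BigOperators
open Real

open Sph

/-!
Since `⟪(x, 1), (y, 1)⟫ = ⟪x, y⟫ + 1`, self-duality of the lifted body says exactly that
`W = {y | ∀ x ∈ W, -1 ≤ ⟪x, y⟫}`. Taking `x = -y` gives `‖y‖ ≤ 1` on `W`, and conversely, by
Cauchy–Schwarz, every point of the unit ball then satisfies all the defining inequalities.
-/

section InnerProductSpace

variable {F : Type*} [NormedAddCommGroup F] [InnerProductSpace ℝ F]

theorem eq_closedBall_of_neg_mem_of_forall_mem_iff {W : Set F} (hsymm : ∀ x ∈ W, -x ∈ W)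
    (hW : ∀ y, y ∈ W ↔ ∀ x ∈ W, -1 ≤ ⟪x, y⟫) : W = Metric.closedBall 0 1 := by
  have hball : ∀ y ∈ W, ‖y‖ ≤ 1 := by
    intro y hy
    have h := (hW y).1 hy (-y) (hsymm y hy)
    rw [inner_neg_left, real_inner_self_eq_norm_sq] at h
    nlinarith [norm_nonneg y]
  ext y
  rw [mem_closedBall_zero_iff]
  refine ⟨hball y, fun hy => (hW y).2 fun x hx => ?_⟩
  have hxy : ‖x‖ * ‖y‖ ≤ 1 := mul_le_one₀ (hball x hx) (norm_nonneg y) hy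
  linarith [neg_abs_le ⟪x, y⟫, abs_real_inner_le_norm x y]

end InnerProductSpace

namespace Sph

variable {n : ℕ}

theorem lift_apply_castSucc (x : EuclideanSpace ℝ (Fin (n + 1))) (i : Fin (n + 1)) :
    lift x i.castSucc = x i := by
  simp [lift]

theorem lift_apply_last (x : EuclideanSpace ℝ (Fin (n + 1))) : lift x (Fin.last (n + 1)) = 1 := by
  simp [lift]

theorem norm_lift_pos (x : EuclideanSpace ℝ (Fin (n + 1))) : 0 < ‖lift x‖ := by
  refine norm_pos_iff.2 fun h => ?_
  simpa [h] using lift_apply_last x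

theorem inner_lift (x y : EuclideanSpace ℝ (Fin (n + 1))) : ⟪lift x, lift y⟫ = ⟪x, y⟫ + 1 := by
  rw [PiLp.inner_apply, PiLp.inner_apply, Fin.sum_univ_castSucc]
  simp [lift_apply_castSucc, lift_apply_last]

theorem inner_nmz_lift (x y : EuclideanSpace ℝ (Fin (n + 1))) :
    ⟪nmz (lift x), nmz (lift y)⟫ = (‖lift x‖⁻¹ * ‖lift y‖⁻¹) * (⟪x, y⟫ + 1) := by
  rw [nmz, nmz, real_inner_smul_left, real_inner_smul_right, inner_lift]
  ring

theorem norm_nmz_lift (x : EuclideanSpace ℝ (Fin (n + 1))) : ‖nmz (lift x)‖ = 1 := by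
  rw [nmz, norm_smul, norm_inv, norm_norm, inv_mul_cancel₀ (norm_lift_pos x).ne']

theorem nmz_lift_injective :
    Function.Injective (fun x : EuclideanSpace ℝ (Fin (n + 1)) => (nmz (lift x) : E n)) := by
  intro x y h
  have hlast := congrArg (· (Fin.last (n + 1))) h
  simp only [nmz, PiLp.smul_apply, lift_apply_last, smul_eq_mul, mul_one] at hlast
  ext i
  have hi := congrArg (· i.castSucc) h
  simp only [nmz, PiLp.smul_apply, lift_apply_castSucc, smul_eq_mul, hlast] at hi
  exact mul_left_cancel₀ (inv_ne_zero (norm_lift_pos y).ne') hi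

theorem nmz_lift_mem_polar_iff (W : Set (EuclideanSpace ℝ (Fin (n + 1))))
    (y : EuclideanSpace ℝ (Fin (n + 1))) :
    nmz (lift y) ∈ polar {X : E n | ∃ x ∈ W, X = nmz (lift x)} ↔ ∀ x ∈ W, -1 ≤ ⟪x, y⟫ := by
  have hinner (x : EuclideanSpace ℝ (Fin (n + 1))) :
      0 ≤ ⟪nmz (lift x), nmz (lift y)⟫ ↔ -1 ≤ ⟪x, y⟫ := by
    have := norm_lift_pos x
    have := norm_lift_pos y
    rw [inner_nmz_lift, mul_nonneg_iff_of_pos_left (by positivity), neg_le_iff_add_nonneg', add_comm]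
  refine ⟨fun h x hx => (hinner x).1 (h.2 _ ⟨x, hx, rfl⟩), fun h => ⟨norm_nmz_lift y, ?_⟩⟩
  rintro _ ⟨x, hx, rfl⟩
  exact (hinner x).2 (h x hx)

theorem mem_iff_of_lift_eq_polar {W : Set (EuclideanSpace ℝ (Fin (n + 1)))}
    (hself : {X : E n | ∃ x ∈ W, X = nmz (lift x)} =
      polar {X : E n | ∃ x ∈ W, X = nmz (lift x)})
    (y : EuclideanSpace ℝ (Fin (n + 1))) : y ∈ W ↔ ∀ x ∈ W, -1 ≤ ⟪x, y⟫ := by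
  rw [← nmz_lift_mem_polar_iff, ← hself]
  exact ⟨fun hy => ⟨y, hy, rfl⟩, fun ⟨x, hx, hxy⟩ => nmz_lift_injective hxy ▸ hx⟩

end Sph

theorem centrally_symmetric_self_dual_is_ball_general {n : ℕ}
    (W : Set (EuclideanSpace ℝ (Fin (n + 1))))
    (hsymm : ∀ x ∈ W, -x ∈ W)
    (hself : {X : E n | ∃ x ∈ W, X = nmz (lift x)} =
      polar {X : E n | ∃ x ∈ W, X = nmz (lift x)}) :
    W = Metric.closedBall 0 1 :=
  eq_closedBall_of_neg_mem_of_forall_mem_iff hsymm (mem_iff_of_lift_eq_polar hself)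

theorem centrally_symmetric_self_dual_is_ball {n : ℕ}
    (W : Set (EuclideanSpace ℝ (Fin (n + 1)))) (hconv : Convex ℝ W)
    (hcomp : IsCompact W) (h0 : 0 ∈ interior W)
    (hsymm : ∀ x ∈ W, -x ∈ W)
    (hself : {X : E n | ∃ x ∈ W, X = nmz (lift x)} =
      polar {X : E n | ∃ x ∈ W, X = nmz (lift x)}) :
    W = Metric.closedBall 0 1 :=
  centrally_symmetric_self_dual_is_ball_general W hsymm hself
end
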